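/- arXiv:gr-qc/9604017 — 4 statements merged into one kernel-verified Lean document; each statement's English description precedes it below -/
import Mathlib

section
/- Let V be a finite-dimensional real vector space and let P : V × V → V be a symmetric bilinear map (P(u,w) = P(w,u) for all u, w). If for every v ∈ V there exists a scalar c ∈ ℝ with P(v,v) = c • v, then there exists a linear functional ψ : V → ℝ such that P(u,w) = ψ(u) • w + ψ(w) • u for all u, w ∈ V. Conversely, every map of this form satisfies P(v,v) = 2ψ(v) • v for all v. (This is the algebraic classification of the deformation tensors P^α_{βγ} = ψ_(β δ^α_γ) characterizing na₍₀₎-maps (π₍₀₎-maps), i.e. the first class in the paper's Theorem 2.) -/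
/-- classification of na₍₀₎-map (a-map) deformation tensors:
a symmetric bilinear map `P : V × V → V` on a finite-dimensional real vector
space satisfies `P v v ∥ v` for every `v` iff it has the form
`P u w = ψ u • w + ψ w • u` for a linear functional `ψ`; conversely every map
of this form satisfies `P v v = 2 ψ v • v`. -/
theorem stmt_0 (V : Type*) [AddCommGroup V] [Module ℝ V] [FiniteDimensional ℝ V]
    (P : V →ₗ[ℝ] V →ₗ[ℝ] V) (hsymm : ∀ u w : V, P u w = P w u) :
    ((∀ v : V, ∃ c : ℝ, P v v = c • v) →
      ∃ ψ : V →ₗ[ℝ] ℝ, ∀ u w : V, P u w = ψ u • w + ψ w • u) ∧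
    (∀ ψ : V →ₗ[ℝ] ℝ, (∀ u w : V, P u w = ψ u • w + ψ w • u) →
      ∀ v : V, P v v = (2 * ψ v) • v) := by
  constructor
  · intro h
    classical
    choose c0 hc0 using h
    set c : V → ℝ := fun v => if v = 0 then 0 else c0 v with hcdef
    have hc : ∀ v, P v v = c v • v := by
      intro v
      by_cases hv : v = 0
      · simp [hcdef, hv]
      · simp only [hcdef, hv, if_false]
        exact hc0 v
    have hzero : c 0 = 0 := by simp [hcdef]
    have hsmul : ∀ (a : ℝ) (v : V), c (a • v) = a * c v := by
      intro a v
      by_cases hv : v = 0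
      · simp [hcdef, hv]
      by_cases ha : a = 0
      · simp [hcdef, ha, hv]
      have hav : a • v ≠ 0 := smul_ne_zero ha hv
      have h2 : P (a • v) (a • v) = (a * c v) • (a • v) := by
        simp only [map_smul, LinearMap.smul_apply, hc v]
        module
      have h3 : (c (a • v) - a * c v) • (a • v) = 0 := by
        rw [sub_smul, ← h2, hc (a • v), sub_self]
      rcases smul_eq_zero.mp h3 with h4 | h4
      · linarith [sub_eq_zero.mp h4]
      · exact absurd h4 hav
    have hdich : ∀ u w : V, (∃ a : ℝ, w = a • u) ∨ (∃ a : ℝ, u = a • w) ∨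
        (∀ s t : ℝ, s • u + t • w = 0 → s = 0 ∧ t = 0) := by
      intro u w
      by_cases h1 : ∃ a : ℝ, w = a • u
      · exact Or.inl h1
      by_cases h2 : ∃ a : ℝ, u = a • w
      · exact Or.inr (Or.inl h2)
      refine Or.inr (Or.inr ?_)
      intro s t hst
      by_cases hs : s = 0
      · subst hs
        refine ⟨rfl, ?_⟩
        by_contra ht
        apply h1
        have h5 : t • w = 0 := by simpa using hst
        rcases smul_eq_zero.mp h5 with h6 | h6
        · exact absurd h6 ht
        · exact ⟨0, by simp [h6]⟩
      · exfalso
        apply h2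
        refine ⟨-t/s, ?_⟩
        have h3 : s • u = (-t) • w := by
          have h4 := eq_neg_of_add_eq_zero_left hst
          rw [h4, neg_smul]
        calc u = s⁻¹ • (s • u) := by rw [smul_smul, inv_mul_cancel₀ hs, one_smul]
          _ = s⁻¹ • ((-t) • w) := by rw [h3]
          _ = (-t/s) • w := by rw [smul_smul]; congr 1; ring
    have hpair : ∀ u w : V, (∀ s t : ℝ, s • u + t • w = 0 → s = 0 ∧ t = 0) →
        c (u + w) = c u + c w ∧ P u w = (c w / 2) • u + (c u / 2) • w := by
      intro u w hind
      have e1 : c u • u + c w • w + (P u w + P w u) = c (u + w) • u + c (u + w) • w := by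
        have h5 := hc (u + w)
        simp only [map_add, LinearMap.add_apply] at h5
        rw [hc u, hc w, smul_add] at h5
        linear_combination (norm := module) h5
      have e2 : c u • u + c w • w - (P u w + P w u) = c (u - w) • u - c (u - w) • w := by
        have h5 := hc (u - w)
        simp only [map_sub, LinearMap.sub_apply] at h5
        rw [hc u, hc w, smul_sub] at h5
        linear_combination (norm := module) h5
      have key : (2 * c u - (c (u + w) + c (u - w))) • u
          + (2 * c w - (c (u + w) - c (u - w))) • w = 0 := by
        linear_combination (norm := module) e1 + e2
      obtain ⟨k1, k2⟩ := hind _ _ key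
      have hA : c (u + w) = c u + c w := by linarith
      refine ⟨hA, ?_⟩
      have e3 : (2:ℝ) • (P u w + P w u) = (c (u + w) - c (u - w)) • u
          + (c (u + w) + c (u - w)) • w := by
        linear_combination (norm := module) e1 - e2
      have hAB1 : c (u + w) + c (u - w) = 2 * c u := by linarith
      have hAB2 : c (u + w) - c (u - w) = 2 * c w := by linarith
      rw [hAB1, hAB2, hsymm w u] at e3
      linear_combination (norm := module) (4⁻¹ : ℝ) • e3
    have cadd : ∀ u w : V, c (u + w) = c u + c w := by
      intro u w
      rcases hdich u w with ⟨a, rfl⟩ | ⟨a, rfl⟩ | hind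
      · have h5 : u + a • u = (1 + a) • u := by module
        rw [h5, hsmul, hsmul]; ring_nf
      · have h5 : a • w + w = (a + 1) • w := by module
        rw [h5, hsmul, hsmul]; ring_nf
      · exact (hpair u w hind).1
    have hP : ∀ u w : V, P u w = (c u / 2) • w + (c w / 2) • u := by
      intro u w
      rcases hdich u w with ⟨a, rfl⟩ | ⟨a, rfl⟩ | hind
      · rw [hsmul]
        have h5 : P u (a • u) = a • P u u := by simp [map_smul]
        rw [h5, hc u]
        module
      · rw [hsmul]
        have h5 : P (a • w) w = a • P w w := by
          rw [map_smul, LinearMap.smul_apply]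
        rw [h5, hc w]
        module
      · have h5 := (hpair u w hind).2
        rw [h5]; module
    refine ⟨{ toFun := fun v => c v / 2,
              map_add' := by intro u w; show c (u + w) / 2 = c u / 2 + c w / 2; rw [cadd]; ring,
              map_smul' := by
                intro a v
                simp only [RingHom.id_apply, smul_eq_mul]
                rw [hsmul]; ring }, ?_⟩
    intro u w
    exact hP u w
  · intro ψ hψ v
    rw [hψ v v, two_mul, add_smul]
end

section
/- Let V be a real vector space with 3 ≤ dim V < ∞, let w ∈ V be a fixed vector, and let P : V × V → V be a symmetric bilinear map such that for every v ∈ V there exist scalars a, b ∈ ℝ with P(v,v) = a • v + b • w. Then there exist a linear functional ψ : V → ℝ and a symmetric bilinear form σ : V × V → ℝ such that P(u,v) = ψ(u) • v + ψ(v) • u + σ(u,v) • w for all u, v ∈ V. (This is the algebraic classification of the deformation tensors P^α_{βγ} = ψ_(β δ^α_γ) + σ_{βγ} φ^α characterizing na₍₃₎-maps, the fourth class in the paper's Theorem 2.) -/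
/-!
Modulo `w`, `P v v` is proportional to `v` in `V ⧸ ℝ w`, a space of dimension at least two.
For a symmetric bilinear `Q` into such a space with `Q v v ∈ K ∙ π v`, expanding `Q` on
`u ± v` gives `2 Q(u, v) = b π u + a π v` whenever `π u, π v` are independent, where
`Q u u = a π u` and `Q v v = b π v`. Fixing `x` and a functional `g` with `g (π x) = 1`, the
linear form `ψ = g (Q (·, x)) - (a/2) g ∘ π` makes `R = Q - ψ ⊗ π - π ⊗ ψ` vanish on the
diagonal: first on vectors independent of `x` modulo `ker π`, then on all vectors by the
parallelogram law, hence `R = 0` by polarization. Lifting back, `P u v - ψ u • v - ψ v • u`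
lies on the line `ℝ w`, and its coefficient is the symmetric form `σ`.
-/

open Module Submodule

section

variable {K V W : Type*} [Field K] [AddCommGroup V] [Module K V] [AddCommGroup W] [Module K W]

lemma LinearMap.apply_add_add_apply_sub (B : V →ₗ[K] V →ₗ[K] W) (u v : V) :
    B (u + v) (u + v) + B (u - v) (u - v) = (2 : K) • (B u u + B v v) := by
  simp only [map_add, map_sub, LinearMap.add_apply, LinearMap.sub_apply]
  module

lemma LinearIndependent.pair_smul_add_smul {x y : W} (hxy : LinearIndependent K ![x, y])
    {c t : K} (ht : t ≠ 0) : LinearIndependent K ![c • x + t • y, x] := by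
  rw [LinearIndependent.pair_iff] at hxy ⊢
  intro r s h
  obtain ⟨h₁, h₂⟩ := hxy (r * c + s) (r * t) (by rw [← h]; module)
  have hr : r = 0 := (mul_eq_zero.1 h₂).resolve_right ht
  exact ⟨hr, by simpa [hr] using h₁⟩

section

variable [NeZero (2 : K)] {Q : V →ₗ[K] V →ₗ[K] W}

lemma LinearMap.eq_zero_of_symm_of_apply_self_eq_zero (hs : ∀ u v, Q u v = Q v u)
    (hdiag : ∀ v, Q v v = 0) : Q = 0 := by
  ext u v
  have h : Q (u + v) (u + v) = Q u u + (2 : K) • Q u v + Q v v := by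
    simp only [map_add, LinearMap.add_apply, hs v u]
    module
  rw [hdiag, hdiag, hdiag, zero_add, add_zero, eq_comm, smul_eq_zero] at h
  exact h.resolve_left two_ne_zero

variable {π : V →ₗ[K] W}

lemma two_smul_apply_eq_of_linearIndependent (hs : ∀ u v, Q u v = Q v u)
    (hq : ∀ v, ∃ a : K, Q v v = a • π v) {u v : V} {a b : K} (hu : Q u u = a • π u)
    (hv : Q v v = b • π v) (huv : LinearIndependent K ![π u, π v]) :
    (2 : K) • Q u v = b • π u + a • π v := by
  obtain ⟨c, hc⟩ := hq (u + v)
  obtain ⟨d, hd⟩ := hq (u - v)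
  simp only [map_add, map_sub, LinearMap.add_apply, LinearMap.sub_apply, hs v u, hu, hv] at hc hd
  obtain ⟨hcd, hcd'⟩ := LinearIndependent.pair_iff.1 huv (2 * a - c - d) (2 * b - c + d)
    (by linear_combination (norm := module) hc + hd)
  apply smul_right_injective W (two_ne_zero (α := K))
  linear_combination (norm := module) hc - hd - hcd' • π u - hcd • π v

lemma eq_zero_of_apply_self_eq_smul [FiniteDimensional K W] (hs : ∀ u v, Q u v = Q v u)
    (hq : ∀ v, ∃ a : K, Q v v = a • π v) (hW : 1 < finrank K W)
    (hπ : Function.Surjective π) {x : V} {g : W →ₗ[K] K} (hgx : g (π x) = 1)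
    (hxx : Q x x = 0) (hgQ : ∀ u, g (Q u x) = 0) : Q = 0 := by
  have hind : ∀ u, LinearIndependent K ![π u, π x] → Q u u = 0 := by
    intro u hu
    obtain ⟨a, ha⟩ := hq u
    have h := congrArg g
      (two_smul_apply_eq_of_linearIndependent hs hq ha (hxx.trans (zero_smul K _).symm) hu)
    simp only [map_smul, map_add, hgQ, hgx, smul_eq_mul, mul_zero, zero_mul, zero_add,
      mul_one] at h
    rw [ha, ← h, zero_smul]
  have hπx : π x ≠ 0 := fun h => by simp [h] at hgx
  obtain ⟨y', hy⟩ := exists_linearIndependent_pair_of_one_lt_finrank hW hπx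
  obtain ⟨y, rfl⟩ := hπ y'
  refine LinearMap.eq_zero_of_symm_of_apply_self_eq_zero hs fun u => ?_
  by_cases hu : LinearIndependent K ![π u, π x]
  · exact hind u hu
  -- `u` is the midpoint of `u + y` and `u - y`, both independent of `x` modulo `ker π`.
  obtain ⟨c, hc⟩ : ∃ c : K, c • π x = π u := by
    simpa [LinearIndependent.pair_symm_iff, LinearIndependent.pair_iff' hπx] using hu
  have hshift : ∀ t : K, t ≠ 0 → Q (u + t • y) (u + t • y) = 0 := fun t ht =>
    hind _ (by simpa [← hc] using hy.pair_smul_add_smul (c := c) ht)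
  have h := LinearMap.apply_add_add_apply_sub Q u y
  rw [← one_smul K y, sub_eq_add_neg, ← neg_smul, hshift 1 one_ne_zero,
    hshift (-1) (neg_ne_zero.2 one_ne_zero), one_smul,
    hind y (LinearIndependent.pair_symm_iff.1 hy), add_zero, add_zero, eq_comm,
    smul_eq_zero] at h
  exact h.resolve_left two_ne_zero

theorem exists_eq_smul_add_smul_of_apply_self_eq_smul [FiniteDimensional K W]
    (hs : ∀ u v, Q u v = Q v u) (hq : ∀ v, ∃ a : K, Q v v = a • π v) (hW : 1 < finrank K W)
    (hπ : Function.Surjective π) :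
    ∃ ψ : V →ₗ[K] K, ∀ u v, Q u v = ψ u • π v + ψ v • π u := by
  have : Nontrivial W := Module.nontrivial_of_finrank_pos (R := K) (by omega)
  obtain ⟨x', hx⟩ := exists_ne (0 : W)
  obtain ⟨x, rfl⟩ := hπ x'
  obtain ⟨g, hgx⟩ := Module.Projective.exists_dual_eq_one K hx
  obtain ⟨a, ha⟩ := hq x
  -- normalized so that `R` below satisfies `R x x = 0` and `g (R u x) = 0`
  let ψ : V →ₗ[K] K := g ∘ₗ Q.flip x - (a / 2) • (g ∘ₗ π)
  have hψ : ∀ u, ψ u = g (Q u x) - a / 2 * g (π u) := fun _ => rfl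
  have hψx : ψ x = a / 2 := by
    rw [hψ, ha, map_smul, hgx, smul_eq_mul, mul_one, mul_one, sub_half]
  let R := Q - ψ.smulRight π - (ψ.smulRight π).flip
  have hR : ∀ u v, R u v = Q u v - ψ u • π v - ψ v • π u := fun _ _ => rfl
  have hR0 : R = 0 := by
    refine eq_zero_of_apply_self_eq_smul (π := π) (fun u v => ?_) (fun v => ?_) hW hπ hgx ?_
      (fun u => ?_)
    · rw [hR, hR, hs]; abel
    · obtain ⟨b, hb⟩ := hq v
      exact ⟨b - 2 * ψ v, by rw [hR, hb]; module⟩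
    · rw [hR, ha, hψx, sub_sub, ← add_smul, add_halves, sub_self]
    · rw [hR, map_sub, map_sub, map_smul, map_smul, hψx, hψ, hgx, smul_eq_mul, smul_eq_mul]
      ring
  refine ⟨ψ, fun u v => ?_⟩
  rw [← sub_eq_zero, sub_add_eq_sub_sub, ← hR, hR0, LinearMap.zero_apply, LinearMap.zero_apply]

end

lemma exists_dual_smul_eq_of_mem_span_singleton (w : V) :
    ∃ f : V →ₗ[K] K, ∀ x ∈ K ∙ w, f x • w = x := by
  rcases eq_or_ne w 0 with rfl | hw
  · exact ⟨0, by simp⟩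
  obtain ⟨f, hf⟩ := Module.Projective.exists_dual_eq_one K hw
  refine ⟨f, fun x hx => ?_⟩
  obtain ⟨c, rfl⟩ := mem_span_singleton.1 hx
  simp [hf]

lemma exists_symm_eq_smul_of_forall_mem_span_singleton {M : Type*} [AddCommGroup M]
    [Module K M] {B : M →ₗ[K] M →ₗ[K] V} (hs : ∀ u v, B u v = B v u) {w : V}
    (hB : ∀ u v, B u v ∈ K ∙ w) :
    ∃ σ : M →ₗ[K] M →ₗ[K] K, (∀ u v, σ u v = σ v u) ∧ ∀ u v, B u v = σ u v • w := by
  obtain ⟨f, hf⟩ := exists_dual_smul_eq_of_mem_span_singleton (K := K) w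
  exact ⟨B.compr₂ f, fun u v => by simp [hs u v], fun u v => (hf _ (hB u v)).symm⟩

end

/-- classification of na₍₃₎-map deformation tensors: if `dim V ≥ 3`,
`w : V` is fixed, and `P` is a symmetric bilinear map with `P v v ∈ span {v, w}`
for every `v`, then `P u v = ψ u • v + ψ v • u + σ u v • w` for some linear
functional `ψ` and symmetric bilinear form `σ`. -/
theorem stmt_1 (V : Type*) [AddCommGroup V] [Module ℝ V] [FiniteDimensional ℝ V]
    (h3 : 3 ≤ Module.finrank ℝ V) (w : V)
    (P : V →ₗ[ℝ] V →ₗ[ℝ] V) (hsymm : ∀ u v : V, P u v = P v u)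
    (hprop : ∀ v : V, ∃ a b : ℝ, P v v = a • v + b • w) :
    ∃ (ψ : V →ₗ[ℝ] ℝ) (σ : V →ₗ[ℝ] V →ₗ[ℝ] ℝ),
      (∀ u v : V, σ u v = σ v u) ∧
      ∀ u v : V, P u v = ψ u • v + ψ v • u + σ u v • w := by
  have hdim : 1 < finrank ℝ (V ⧸ ℝ ∙ w) := by
    have := (ℝ ∙ w).finrank_quotient_add_finrank
    have : finrank ℝ (ℝ ∙ w) ≤ 1 := (finrank_span_le_card {w}).trans (by simp)
    omega
  obtain ⟨ψ, hψ⟩ := exists_eq_smul_add_smul_of_apply_self_eq_smul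
    (Q := P.compr₂ (ℝ ∙ w).mkQ) (fun u v => by simp [hsymm u v])
    (fun v => by obtain ⟨a, b, h⟩ := hprop v; exact ⟨a, by simp [h]⟩)
    hdim (mkQ_surjective _)
  let T := P - ψ.smulRight LinearMap.id - (ψ.smulRight LinearMap.id).flip
  have hT : ∀ u v, T u v = P u v - ψ u • v - ψ v • u := fun _ _ => rfl
  obtain ⟨σ, hσs, hσ⟩ := exists_symm_eq_smul_of_forall_mem_span_singleton (B := T)
    (fun u v => by simp only [hT, hsymm u v]; abel)
    (fun u v => by
      rw [← Quotient.mk_eq_zero, hT]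
      simpa [sub_eq_zero, sub_sub] using hψ u v)
  refine ⟨ψ, σ, hσs, fun u v => ?_⟩
  rw [← hσ, hT]
  abel
end

section
/- Let N ≥ 1 and let γ, γ̄ be (1,2)-arrays over Fin N, symmetric in their lower indices. Define the Thomas parameters Π(γ)^μ_{αβ} = γ^μ_{αβ} − (1/(N+1))·(δ^μ_α · Σ_τ γ^τ_{βτ} + δ^μ_β · Σ_τ γ^τ_{ατ}), and likewise Π(γ̄). Then there exists ψ : Fin N → ℝ with γ̄^μ_{αβ} = γ^μ_{αβ} + ψ_α δ^μ_β + ψ_β δ^μ_α for all indices if and only if Π(γ̄)^μ_{αβ} = Π(γ)^μ_{αβ} for all indices. (This is the pointwise form of the first a-map invariance condition ⁽⁰⁾T = ⁽⁰⁾T̄ of Theorem 3, case 1.) -/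
/-- Kronecker delta on `Fin N`. -/
def kron {N : ℕ} (μ α : Fin N) : ℝ := if μ = α then 1 else 0

/-- Thomas parameters of a symmetric (1,2)-array `γ`:
`Π(γ)^μ_{αβ} = γ^μ_{αβ} − (δ^μ_α Σ_τ γ^τ_{βτ} + δ^μ_β Σ_τ γ^τ_{ατ})/(N+1)`. -/
noncomputable def thomas {N : ℕ} (γ : Fin N → Fin N → Fin N → ℝ) (μ α β : Fin N) : ℝ :=
  γ μ α β - (1 / ((N : ℝ) + 1)) *
    (kron μ α * ∑ τ, γ τ β τ + kron μ β * ∑ τ, γ τ α τ)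

/-!
The Thomas parameters depend linearly on `γ`, so `Π(γ̄) = Π(γ)` says exactly that the difference
`σ = γ̄ − γ` has vanishing Thomas parameters. A projective shift `ψ_α δ^μ_β + ψ_β δ^μ_α` has
trace `Σ_τ σ^τ_{ατ} = (N + 1) ψ_α`, which makes its Thomas parameters vanish; conversely, if
`Π(σ) = 0` then `σ` is the projective shift of `ψ_α = Σ_τ σ^τ_{ατ} / (N + 1)`.
-/

def projectiveShift {N : ℕ} (ψ : Fin N → ℝ) (μ α β : Fin N) : ℝ :=
  ψ α * kron μ β + ψ β * kron μ α

lemma sum_mul_kron {N : ℕ} (f : Fin N → ℝ) (α : Fin N) : ∑ τ, f τ * kron τ α = f α := by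
  simp [kron]

lemma sum_projectiveShift {N : ℕ} (ψ : Fin N → ℝ) (α : Fin N) :
    ∑ τ, projectiveShift ψ τ α τ = ((N : ℝ) + 1) * ψ α := by
  simp only [projectiveShift, Finset.sum_add_distrib, sum_mul_kron]
  simp only [kron, ↓reduceIte, mul_one, Finset.sum_const, Finset.card_univ, Fintype.card_fin,
    nsmul_eq_mul]
  ring

lemma thomas_sub {N : ℕ} (γ' γ : Fin N → Fin N → Fin N → ℝ) (μ α β : Fin N) :
    thomas (γ' - γ) μ α β = thomas γ' μ α β - thomas γ μ α β := by
  simp only [thomas, Pi.sub_apply, Finset.sum_sub_distrib]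
  ring

lemma thomas_projectiveShift {N : ℕ} (ψ : Fin N → ℝ) (μ α β : Fin N) :
    thomas (projectiveShift ψ) μ α β = 0 := by
  rw [thomas, sum_projectiveShift, sum_projectiveShift, projectiveShift]
  field_simp
  ring

lemma eq_projectiveShift_of_thomas_eq_zero {N : ℕ} {σ : Fin N → Fin N → Fin N → ℝ}
    (h : ∀ μ α β, thomas σ μ α β = 0) (μ α β : Fin N) :
    σ μ α β = projectiveShift (fun α => (∑ τ, σ τ α τ) / ((N : ℝ) + 1)) μ α β := by
  have hμαβ := h μ α β
  rw [thomas] at hμαβ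
  rw [projectiveShift]
  linear_combination hμαβ

theorem stmt_5_general (N : ℕ)
    (γ γ' : Fin N → Fin N → Fin N → ℝ) :
    (∃ ψ : Fin N → ℝ,
        ∀ μ α β, γ' μ α β = γ μ α β + ψ α * kron μ β + ψ β * kron μ α) ↔
    (∀ μ α β, thomas γ' μ α β = thomas γ μ α β) := by
  constructor
  · rintro ⟨ψ, hψ⟩ μ α β
    have hshift : γ' - γ = projectiveShift ψ := by
      funext μ α β
      simp only [Pi.sub_apply, hψ, projectiveShift]
      ring
    rw [← sub_eq_zero, ← thomas_sub, hshift, thomas_projectiveShift]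
  · intro h
    have hσ : ∀ μ α β, thomas (γ' - γ) μ α β = 0 := fun μ α β => by
      rw [thomas_sub, h, sub_self]
    refine ⟨fun α => (∑ τ, (γ' - γ) τ α τ) / ((N : ℝ) + 1), fun μ α β => ?_⟩
    have hμαβ := eq_projectiveShift_of_thomas_eq_zero hσ μ α β
    simp only [Pi.sub_apply, projectiveShift] at hμαβ
    linear_combination hμαβ

/-- two symmetric (1,2)-arrays are related by a projective
(a-map) deformation `γ̄^μ_{αβ} = γ^μ_{αβ} + ψ_(α δ^μ_β)` iff their Thomas
parameters coincide (the invariant `⁽⁰⁾T` of Theorem 3, case 1). -/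
theorem stmt_5 (N : ℕ) (hN : 1 ≤ N)
    (γ γ' : Fin N → Fin N → Fin N → ℝ)
    (hγ : ∀ μ α β, γ μ α β = γ μ β α)
    (hγ' : ∀ μ α β, γ' μ α β = γ' μ β α) :
    (∃ ψ : Fin N → ℝ,
        ∀ μ α β, γ' μ α β = γ μ α β + ψ α * kron μ β + ψ β * kron μ α) ↔
    (∀ μ α β, thomas γ' μ α β = thomas γ μ α β) :=
  stmt_5_general N γ γ'
end

section
/- Let N ≥ 2. For a (1,3)-array r : (Fin N)⁴ → ℝ, written r^τ_{αβγ}, define φ(r)_{βγ} = (1/(N+1)) · Σ_τ r^τ_{τβγ}, ric(r)_{αγ} = Σ_τ r^τ_{ατγ}, ψ(r)_{αγ} = (φ(r)_{αγ} − ric(r)_{αγ})/(N−1), and the projective Weyl-type array W(r)^τ_{αβγ} = r^τ_{αβγ} − δ^τ_α φ(r)_{βγ} − ψ(r)_{αβ} δ^τ_γ + ψ(r)_{αγ} δ^τ_β. Then for every bilinear array ψ : (Fin N)² → ℝ, the projectively deformed array r̄^τ_{αβγ} = r^τ_{αβγ} + δ^τ_α (ψ_{γβ} − ψ_{βγ})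 + ψ_{αβ} δ^τ_γ − ψ_{αγ} δ^τ_β satisfies W(r̄) = W(r) identically. (This is the invariance of the Weyl-type d-tensor ⁽⁰⁾W under a-map deformations of the curvature, the second invariance condition (22) of Theorem 3, case 1, in the holonomic case w = 0; formulas (B3)–(B6) of Appendix B.) -/
/-- `φ(r)_{βγ} = (Σ_τ r^τ_{τβγ})/(N+1)`. -/
noncomputable def phiArr {N : ℕ} (r : Fin N → Fin N → Fin N → Fin N → ℝ)
    (β γ : Fin N) : ℝ :=
  (1 / ((N : ℝ) + 1)) * ∑ τ, r τ τ β γ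

/-- Ricci-type contraction `ric(r)_{αγ} = Σ_τ r^τ_{ατγ}`. -/
def ricArr {N : ℕ} (r : Fin N → Fin N → Fin N → Fin N → ℝ)
    (α γ : Fin N) : ℝ :=
  ∑ τ, r τ α τ γ

/-- `ψ(r)_{αγ} = (φ(r)_{αγ} − ric(r)_{αγ})/(N−1)`. -/
noncomputable def psiArr {N : ℕ} (r : Fin N → Fin N → Fin N → Fin N → ℝ)
    (α γ : Fin N) : ℝ :=
  (phiArr r α γ - ricArr r α γ) / ((N : ℝ) - 1)

/-- The projective Weyl-type array
`W(r)^τ_{αβγ} = r^τ_{αβγ} − δ^τ_α φ(r)_{βγ} − ψ(r)_{αβ} δ^τ_γ + ψ(r)_{αγ} δ^τ_β`. -/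
noncomputable def weylArr {N : ℕ} (r : Fin N → Fin N → Fin N → Fin N → ℝ)
    (τ α β γ : Fin N) : ℝ :=
  r τ α β γ - kron τ α * phiArr r β γ - psiArr r α β * kron τ γ +
    psiArr r α γ * kron τ β

/-- the Weyl-type array `W` is invariant under a-map (projective)
deformations of the curvature:
`r̄^τ_{αβγ} = r^τ_{αβγ} + δ^τ_α (ψ_{γβ} − ψ_{βγ}) + ψ_{αβ} δ^τ_γ − ψ_{αγ} δ^τ_β`
satisfies `W(r̄) = W(r)` (invariance condition (22) of Theorem 3, case 1, in the
holonomic case `w = 0`). -/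
theorem stmt_6 (N : ℕ) (hN : 2 ≤ N)
    (r : Fin N → Fin N → Fin N → Fin N → ℝ)
    (ψ : Fin N → Fin N → ℝ) :
    ∀ τ α β γ : Fin N,
      weylArr (fun τ' α' β' γ' =>
          r τ' α' β' γ' + kron τ' α' * (ψ γ' β' - ψ β' γ') +
            ψ α' β' * kron τ' γ' - ψ α' γ' * kron τ' β') τ α β γ =
        weylArr r τ α β γ := by
  intro τ α β γ
  have h1 : ((N:ℝ)+1) ≠ 0 := by positivity
  have h2 : ((N:ℝ)-1) ≠ 0 := by
    have : (2:ℝ) ≤ (N:ℝ) := by exact_mod_cast hN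
    linarith
  simp only [weylArr, psiArr, phiArr, ricArr, kron]
  simp only [if_pos rfl, Finset.sum_add_distrib, Finset.sum_sub_distrib,
    Finset.sum_const, Finset.card_univ, Fintype.card_fin, nsmul_eq_mul,
    ite_mul, one_mul, zero_mul, mul_ite, mul_one, mul_zero,
    Finset.sum_ite_eq, Finset.sum_ite_eq', Finset.mem_univ, if_true]
  have h3 : (-1 + (N:ℝ)^2) ≠ 0 := by
    intro h
    apply h2
    have : ((N:ℝ)+1) * ((N:ℝ)-1) = 0 := by ring_nf; linarith
    rcases mul_eq_zero.mp this with h' | h'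
    · exact absurd h' h1
    · exact h'
  split_ifs <;> (try field_simp) <;> ring
end
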